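/- For every positive integer n, the number of representations r_2(n) = #{(x,y) ∈ ℤ² : x² + y² = n} satisfies r_2(n) = 4 · ∑_{d | n, d odd} (-1)^{(d-1)/2}. -/

import Mathlib

/-!
Both sides are computed one prime power at a time. The right-hand side is `4 · (1 ∗ χ₄)(n)`,
whose factor at `p ^ e` is `∑_{i ≤ e} χ₄(p) ^ i`. On the left, `r₂(n)` counts Gaussian integers
of norm `n`, and if `p ^ e ∥ n` the count for `n = p ^ e m` reduces to the one for `m`:
* `1 + i` divides every Gaussian integer of even norm, so multiplying by it matches norm `m`
  with norm `2m`;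
* for `p ≡ 3 (mod 4)`, `p` is a Gaussian prime, so it divides every `z` with `p ∣ N z`; hence
  norm `p ^ 2 m` matches norm `m`, and norm `p m` is impossible;
* for `p ≡ 1 (mod 4)`, `p = π π̄` with non-associated Gaussian primes `π`, `π̄`, and every `z` of
  norm `p ^ e m` is uniquely `π ^ a π̄ ^ b w` with `a + b = e` and `N w = m`.
-/

open ArithmeticFunction Finset.HasAntidiagonal
open scoped ArithmeticFunction.zeta

local notation "ℤ[i]" => GaussianInt

theorem Prime.eq_of_pow_mul_eq_pow_mul {α : Type*} [CommMonoidWithZero α] [IsCancelMulZero α]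
    {p x y : α} (hp : Prime p) (hx : ¬p ∣ x) (hy : ¬p ∣ y) {a c : ℕ}
    (h : p ^ a * x = p ^ c * y) : a = c ∧ x = y := by
  have emultiplicity_eq {z : α} (hz : ¬p ∣ z) (k : ℕ) : emultiplicity p (p ^ k * z) = k := by
    rw [emultiplicity_mul hp, emultiplicity_pow_self_of_prime hp, emultiplicity_eq_zero.mpr hz,
      add_zero]
  have hac : a = c := by
    exact_mod_cast (emultiplicity_eq hx a).symm.trans (h ▸ emultiplicity_eq hy c)
  subst hac
  exact ⟨rfl, mul_left_cancel₀ (pow_ne_zero a hp.ne_zero) h⟩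

theorem ArithmeticFunction.IsMultiplicative.eq_mul_apply_one_of_prime_pow_mul {R : Type*}
    [CommMonoidWithZero R] {g : ArithmeticFunction R} (hg : g.IsMultiplicative) {f : ℕ → R}
    (hf : ∀ p e m : ℕ, p.Prime → ¬p ∣ m → 0 < e → f (p ^ e * m) = g (p ^ e) * f m)
    {n : ℕ} (hn : n ≠ 0) : f n = g n * f 1 := by
  induction n using Nat.recOnPrimePow with
  | zero => exact absurd rfl hn
  | one => rw [hg.map_one, one_mul]
  | prime_pow_mul m p e hp hpm he ih =>
    have hcop : (p ^ e).Coprime m := ((hp.coprime_iff_not_dvd).mpr hpm).pow_left e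
    rw [hf p e m hp hpm he, ih (by rintro rfl; simp at hpm), hg.map_mul_of_coprime hcop,
      mul_assoc]

noncomputable def chi4DivisorSum : ArithmeticFunction ℤ :=
  (ζ : ArithmeticFunction ℤ) * toArithmeticFunction (ZMod.χ₄ ·)

theorem isMultiplicative_chi4DivisorSum : chi4DivisorSum.IsMultiplicative :=
  isMultiplicative_zeta.natCast.mul
    (DirichletCharacter.isMultiplicative_toArithmeticFunction ZMod.χ₄)

theorem chi4DivisorSum_apply (n : ℕ) : chi4DivisorSum n = ∑ d ∈ n.divisors, ZMod.χ₄ d := by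
  rw [chi4DivisorSum, coe_zeta_mul_apply]
  exact Finset.sum_congr rfl fun d hd => if_neg (Nat.pos_of_mem_divisors hd).ne'

theorem chi4DivisorSum_prime_pow {p : ℕ} (hp : p.Prime) (e : ℕ) :
    chi4DivisorSum (p ^ e) = ∑ i ∈ Finset.range (e + 1), ZMod.χ₄ p ^ i := by
  rw [chi4DivisorSum_apply, Nat.sum_divisors_prime_pow hp]
  simp_rw [Nat.cast_pow, map_pow]

theorem sum_odd_divisors_neg_one_pow_eq_chi4DivisorSum (n : ℕ) :
    ∑ d ∈ n.divisors.filter (fun d => d % 2 = 1), (-1 : ℤ) ^ ((d - 1) / 2) =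
      chi4DivisorSum n := by
  rw [chi4DivisorSum_apply, Finset.sum_filter]
  refine Finset.sum_congr rfl fun d _ => ?_
  split_ifs with hd
  · rw [ZMod.χ₄_eq_neg_one_pow hd]; congr 1; omega
  · rw [ZMod.χ₄_nat_eq_if_mod_four, if_pos (by omega)]

namespace GaussianInt

noncomputable def normCount (n : ℕ) : ℕ := Nat.card {z : ℤ[i] // z.norm = n}

theorem ncard_sq_add_sq_eq_normCount (n : ℕ) :
    {p : ℤ × ℤ | p.1 ^ 2 + p.2 ^ 2 = (n : ℤ)}.ncard = normCount n := by
  rw [normCount, ← Nat.card_coe_set_eq]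
  have norm_mk (a b : ℤ) : (⟨a, b⟩ : ℤ[i]).norm = a ^ 2 + b ^ 2 := by
    rw [Zsqrtd.norm_def]; ring
  exact Nat.card_congr
    { toFun := fun x => ⟨⟨x.1.1, x.1.2⟩, (norm_mk _ _).trans x.2⟩
      invFun := fun z => ⟨(z.1.re, z.1.im), (norm_mk _ _).symm.trans z.2⟩
      left_inv := fun _ => rfl
      right_inv := fun _ => rfl }

theorem norm_eq_one_iff_mem {z : ℤ[i]} :
    z.norm = 1 ↔ z ∈ ({1, -1, ⟨0, 1⟩, ⟨0, -1⟩} : Finset ℤ[i]) := by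
  obtain ⟨x, y⟩ := z
  simp only [Zsqrtd.norm_def, Finset.mem_insert, Finset.mem_singleton, Zsqrtd.ext_iff]
  constructor
  · intro h
    have hx1 : -1 ≤ x := by nlinarith [sq_nonneg (x + 1), sq_nonneg y]
    have hx2 : x ≤ 1 := by nlinarith [sq_nonneg (x - 1), sq_nonneg y]
    have hy1 : -1 ≤ y := by nlinarith [sq_nonneg (y + 1), sq_nonneg x]
    have hy2 : y ≤ 1 := by nlinarith [sq_nonneg (y - 1), sq_nonneg x]
    interval_cases x <;> interval_cases y <;> simp_all
  · rintro (⟨rfl, rfl⟩ | ⟨rfl, rfl⟩ | ⟨rfl, rfl⟩ | ⟨rfl, rfl⟩) <;> simp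

theorem normCount_one : normCount 1 = 4 := by
  rw [normCount, Nat.cast_one]
  simp_rw [norm_eq_one_iff_mem]
  rw [Nat.card_eq_fintype_card, Fintype.card_coe]
  decide

theorem norm_pow (z : ℤ[i]) (k : ℕ) : (z ^ k).norm = z.norm ^ k :=
  map_pow Zsqrtd.normMonoidHom z k

theorem prime_of_prime_norm {π : ℤ[i]} (h : Prime π.norm) : Prime π := by
  rw [← UniqueFactorizationMonoid.irreducible_iff_prime]
  refine ⟨fun hu => h.not_isUnit ((Zsqrtd.isUnit_iff_norm_isUnit π).mp hu), fun a b hab => ?_⟩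
  rw [hab, Zsqrtd.norm_mul] at h
  simpa only [Zsqrtd.isUnit_iff_norm_isUnit] using h.irreducible.isUnit_or_isUnit rfl

theorem dvd_or_star_dvd_of_dvd_norm {π z : ℤ[i]} (hπ : Prime π) (h : π ∣ (z.norm : ℤ[i])) :
    π ∣ z ∨ star π ∣ z := by
  rw [Zsqrtd.norm_eq_mul_conj] at h
  refine (hπ.dvd_or_dvd h).imp id fun h => ?_
  simpa only [starRingEnd_apply, star_star] using map_dvd (starRingEnd ℤ[i]) h

theorem dvd_of_dvd_norm_of_dvd_star {π z : ℤ[i]} (hπ : Prime π) (hπs : π ∣ star π)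
    (h : π ∣ (z.norm : ℤ[i])) : π ∣ z :=
  (dvd_or_star_dvd_of_dvd_norm hπ h).elim id hπs.trans

theorem normCount_mul_eq_of_dvd {π : ℤ[i]} {c : ℕ} (hπ : π.norm = c) (hc : c ≠ 0) {m : ℕ}
    (hdvd : ∀ z : ℤ[i], z.norm = (c * m : ℕ) → π ∣ z) : normCount (c * m) = normCount m := by
  have hπ0 : π ≠ 0 := by rintro rfl; simp [eq_comm, hc] at hπ
  let mulπ (w : {w : ℤ[i] // w.norm = m}) : {z : ℤ[i] // z.norm = (c * m : ℕ)} :=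
    ⟨π * w.1, by rw [Zsqrtd.norm_mul, hπ, w.2]; push_cast; ring⟩
  refine (Nat.card_congr (Equiv.ofBijective mulπ ⟨?_, ?_⟩)).symm
  · exact fun w₁ w₂ h => Subtype.ext (mul_left_cancel₀ hπ0 (congrArg Subtype.val h))
  · rintro ⟨z, hz⟩
    obtain ⟨w, rfl⟩ := hdvd z hz
    refine ⟨⟨w, mul_left_cancel₀ (Nat.cast_ne_zero.mpr hc : (c : ℤ) ≠ 0) ?_⟩, rfl⟩
    rw [← hπ, ← Zsqrtd.norm_mul, hz, hπ]; push_cast; ring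

theorem normCount_two_mul (m : ℕ) : normCount (2 * m) = normCount m := by
  have hnorm : (⟨1, 1⟩ : ℤ[i]).norm = (2 : ℕ) := rfl
  have hprime : Prime (⟨1, 1⟩ : ℤ[i]) := prime_of_prime_norm (hnorm ▸ Int.prime_two)
  refine normCount_mul_eq_of_dvd hnorm two_ne_zero fun z hz => ?_
  refine dvd_of_dvd_norm_of_dvd_star hprime ⟨⟨0, -1⟩, rfl⟩ ⟨star ⟨1, 1⟩ * m, ?_⟩
  rw [hz, ← mul_assoc, ← Zsqrtd.norm_eq_mul_conj, hnorm]; push_cast; ring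

theorem normCount_two_pow_mul (e m : ℕ) : normCount (2 ^ e * m) = normCount m := by
  induction e with
  | zero => rw [pow_zero, one_mul]
  | succ e ih => rw [pow_succ', mul_assoc, normCount_two_mul, ih]

section ModFourEqThree

variable {p : ℕ} (hp : p.Prime) (hp3 : p % 4 = 3)
include hp hp3

theorem natCast_dvd_of_dvd_norm {z : ℤ[i]} (h : (p : ℤ) ∣ z.norm) : (p : ℤ[i]) ∣ z := by
  have := Fact.mk hp
  refine dvd_of_dvd_norm_of_dvd_star (prime_of_nat_prime_of_mod_four_eq_three p hp3)
    (by rw [star_natCast]) ?_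
  exact_mod_cast Int.cast_dvd_cast (α := ℤ[i]) _ _ h

theorem normCount_prime_sq_mul (m : ℕ) : normCount (p ^ 2 * m) = normCount m := by
  refine normCount_mul_eq_of_dvd (π := p) (by rw [Zsqrtd.norm_natCast]; push_cast; ring)
    (pow_ne_zero 2 hp.ne_zero) fun z hz => natCast_dvd_of_dvd_norm hp hp3 ⟨p * m, ?_⟩
  rw [hz]; push_cast; ring

theorem normCount_prime_mul_eq_zero {m : ℕ} (hm : ¬p ∣ m) : normCount (p * m) = 0 := by
  refine @Nat.card_of_isEmpty _ ⟨fun ⟨z, hz⟩ => hm ?_⟩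
  obtain ⟨w, rfl⟩ := natCast_dvd_of_dvd_norm hp hp3 (z := z) ⟨m, by rw [hz]; push_cast; ring⟩
  have hw : (p : ℤ) * (p * w.norm) = p * m := by
    rw [← mul_assoc, ← Zsqrtd.norm_natCast, ← Zsqrtd.norm_mul, hz]; push_cast; ring
  exact Int.natCast_dvd_natCast.mp
    ⟨w.norm, (mul_left_cancel₀ (Int.natCast_ne_zero.mpr hp.ne_zero) hw).symm⟩

theorem normCount_prime_pow_mul_of_mod_four_eq_three {m : ℕ} (hm : ¬p ∣ m) (e : ℕ) :
    normCount (p ^ e * m) = if Even e then normCount m else 0 := by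
  induction e using Nat.twoStepInduction with
  | zero => simp
  | one => simpa using normCount_prime_mul_eq_zero hp hp3 hm
  | more e ih _ =>
    rw [pow_add, mul_comm (p ^ e), mul_assoc, normCount_prime_sq_mul hp hp3, ih]
    simp [Nat.even_add]

end ModFourEqThree

theorem exists_prime_norm_eq_not_dvd_star {p : ℕ} (hp : p.Prime) (hp1 : p % 4 = 1) :
    ∃ π : ℤ[i], π.norm = p ∧ Prime π ∧ ¬π ∣ star π := by
  have := Fact.mk hp
  obtain ⟨a, b, hab⟩ := Nat.Prime.sq_add_sq (p := p) (by omega)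
  have hnorm : (⟨a, b⟩ : ℤ[i]).norm = p := by rw [Zsqrtd.norm_def, ← hab]; push_cast; ring
  refine ⟨⟨a, b⟩, hnorm, prime_of_prime_norm (hnorm ▸ Nat.prime_iff_prime_int.mp hp), ?_⟩
  rintro ⟨u, hu⟩
  have hu1 : u.norm = 1 := by
    have := congrArg Zsqrtd.norm hu
    rwa [Zsqrtd.norm_conj, Zsqrtd.norm_mul, hnorm, eq_comm,
      mul_eq_left₀ (Int.natCast_ne_zero.mpr hp.ne_zero)] at this
  rw [norm_eq_one_iff_mem] at hu1
  simp only [Finset.mem_insert, Finset.mem_singleton] at hu1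
  -- the four units give `b = 0`, `a = 0`, `a = b = 0` and `a = b`
  rcases hu1 with rfl | rfl | rfl | rfl <;> simp [Zsqrtd.ext_iff] at hu
  · exact Nat.Prime.not_prime_pow le_rfl (by simpa [hu, ← hab] using hp)
  · exact Nat.Prime.not_prime_pow le_rfl (by simpa [hu, ← hab] using hp)
  · simp [hu.1.1, hu.1.2, eq_comm, hp.ne_zero] at hab
  · rw [hu.1] at hab; omega

section Split

variable {p : ℕ} {π : ℤ[i]} (hπp : π.norm = p) (hπ : Prime π)
include hπp hπ

theorem exists_eq_pow_mul_star_pow_mul {m e : ℕ} {z : ℤ[i]} (hz : z.norm = (p ^ e * m : ℕ)) :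
    ∃ a b w, a + b = e ∧ w.norm = (m : ℤ) ∧ z = π ^ a * (star π ^ b * w) := by
  have hp0 : (p : ℤ) ≠ 0 := hπp ▸ norm_eq_zero.not.mpr hπ.ne_zero
  induction e generalizing z with
  | zero => exact ⟨0, 0, z, rfl, by simpa using hz, by simp⟩
  | succ e ih =>
    have hπz : π ∣ (z.norm : ℤ[i]) := by
      refine ⟨star π * (p ^ e * m : ℕ), ?_⟩
      rw [← mul_assoc, ← Zsqrtd.norm_eq_mul_conj, hz, hπp]; push_cast; ring
    have cancel {σ z' : ℤ[i]} (hσ : σ.norm = p) (hz : (σ * z').norm = (p ^ (e + 1) * m : ℕ)) :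
        z'.norm = (p ^ e * m : ℕ) :=
      mul_left_cancel₀ hp0 (by rw [← hσ, ← Zsqrtd.norm_mul, hz, hσ]; push_cast; ring)
    rcases dvd_or_star_dvd_of_dvd_norm hπ hπz with ⟨z', rfl⟩ | ⟨z', rfl⟩
    · obtain ⟨a, b, w, hab, hw, rfl⟩ := ih (cancel hπp hz)
      exact ⟨a + 1, b, w, by omega, hw, by ring⟩
    · obtain ⟨a, b, w, hab, hw, rfl⟩ := ih (cancel ((Zsqrtd.norm_conj π).trans hπp) hz)
      exact ⟨a, b + 1, w, by omega, hw, by ring⟩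

theorem normCount_prime_pow_mul_of_not_dvd_star (hπs : ¬π ∣ star π) {m : ℕ} (hm : ¬p ∣ m)
    (e : ℕ) : normCount (p ^ e * m) = (e + 1) * normCount m := by
  have hπw {w : ℤ[i]} (hw : w.norm = m) : ¬π ∣ w := fun h =>
    hm (Int.natCast_dvd_natCast.mp (hπp ▸ hw ▸ map_dvd Zsqrtd.normMonoidHom h))
  have hπsw {b : ℕ} {w : ℤ[i]} (hw : w.norm = m) : ¬π ∣ star π ^ b * w :=
    hπ.not_dvd_mul (fun h => hπs (hπ.dvd_of_dvd_pow h)) (hπw hw)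
  let φ (x : antidiagonal e × {w : ℤ[i] // w.norm = m}) :
      {z : ℤ[i] // z.norm = (p ^ e * m : ℕ)} :=
    ⟨π ^ x.1.1.1 * (star π ^ x.1.1.2 * x.2.1), by
      rw [Zsqrtd.norm_mul, Zsqrtd.norm_mul, norm_pow, norm_pow, Zsqrtd.norm_conj, hπp, x.2.2,
        ← mul_assoc, ← pow_add, mem_antidiagonal.mp x.1.2]; push_cast; rfl⟩
  have hφ : Function.Bijective φ := by
    refine ⟨?_, fun ⟨z, hz⟩ => ?_⟩
    · rintro ⟨⟨⟨a, b⟩, hab⟩, ⟨u, hu⟩⟩ ⟨⟨⟨c, d⟩, hcd⟩, ⟨v, hv⟩⟩ h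
      rw [mem_antidiagonal] at hab hcd
      obtain ⟨rfl, hbd⟩ : a = c ∧ star π ^ b * u = star π ^ d * v :=
        hπ.eq_of_pow_mul_eq_pow_mul (hπsw hu) (hπsw hv) (congrArg Subtype.val h)
      obtain rfl : b = d := by omega
      obtain rfl := mul_left_cancel₀ (pow_ne_zero b (star_ne_zero.mpr hπ.ne_zero)) hbd
      rfl
    · obtain ⟨a, b, w, hab, hw, rfl⟩ := exists_eq_pow_mul_star_pow_mul hπp hπ hz
      exact ⟨⟨⟨(a, b), mem_antidiagonal.mpr hab⟩, ⟨w, hw⟩⟩, rfl⟩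
  rw [normCount, normCount, ← Nat.card_congr (Equiv.ofBijective φ hφ), Nat.card_prod,
    Nat.card_eq_fintype_card, Fintype.card_coe, Finset.Nat.card_antidiagonal]

end Split

theorem normCount_prime_pow_mul {p : ℕ} (hp : p.Prime) {m : ℕ} (hm : ¬p ∣ m) (e : ℕ) :
    (normCount (p ^ e * m) : ℤ) = chi4DivisorSum (p ^ e) * normCount m := by
  rw [chi4DivisorSum_prime_pow hp]
  obtain rfl | hp2 := eq_or_ne p 2
  · rw [normCount_two_pow_mul]
    simp [Finset.sum_range_succ']
  obtain hp1 | hp3 : p % 4 = 1 ∨ p % 4 = 3 := by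
    have := Nat.odd_iff.mp (hp.odd_of_ne_two hp2); omega
  · obtain ⟨π, hπp, hπ, hπs⟩ := exists_prime_norm_eq_not_dvd_star hp hp1
    rw [normCount_prime_pow_mul_of_not_dvd_star hπp hπ hπs hm, ZMod.χ₄_nat_one_mod_four hp1]
    simp
  · rw [normCount_prime_pow_mul_of_mod_four_eq_three hp hp3 hm,
      ZMod.χ₄_nat_three_mod_four hp3, neg_one_geom_sum]
    by_cases he : Even e <;> simp [Nat.even_add_one, he]

end GaussianInt

/-- The representation count `r₂(n)` equals `4·∑_{d ∣ n, d odd} (-1)^((d-1)/2)`. -/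
theorem stmt_3 (n : ℕ) (hn : 0 < n) :
    (({p : ℤ × ℤ | p.1 ^ 2 + p.2 ^ 2 = (n : ℤ)}.ncard : ℤ)) =
      4 * ∑ d ∈ n.divisors.filter (fun d => d % 2 = 1), (-1 : ℤ) ^ ((d - 1) / 2) := by
  rw [GaussianInt.ncard_sq_add_sq_eq_normCount, sum_odd_divisors_neg_one_pow_eq_chi4DivisorSum,
    isMultiplicative_chi4DivisorSum.eq_mul_apply_one_of_prime_pow_mul
      (f := (GaussianInt.normCount · : ℕ → ℤ))
      (fun p e m hp hm _ => GaussianInt.normCount_prime_pow_mul hp hm e) hn.ne',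
    GaussianInt.normCount_one]
  push_cast
  ring
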